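/- Let γ be Gamma distributed with shape α > 0 and rate β > 0, and let E_α(β) = ∫₁^∞ e^{−βt} t^{−α} dt denote the generalized exponential integral. Then E[1 − 1/(2(1+γ)²)] = (1/2)·(2 − β + e^β β (α + β − 1) E_α(β)). -/

import Mathlib

/-- Density of the Gamma(α, β) distribution on (0, ∞). -/
noncomputable def gammaDens (α β u : ℝ) : ℝ :=
  β ^ α * u ^ (α - 1) * Real.exp (-β * u) / Real.Gamma α

/-- Generalized exponential integral E_n(z) = ∫₁^∞ e^{−zt} t^{−n} dt. -/
noncomputable def expIntE (n z : ℝ) : ℝ :=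
  ∫ t in Set.Ioi (1 : ℝ), Real.exp (-z * t) * t ^ (-n)

/-!
Since `1 - 1/(2(1+γ)²)` has mean `1 - E[(1+γ)⁻²]/2`, everything rests on `E[(1+γ)⁻²]`. Writing
`(1+u)⁻² = ∫₀^∞ s e^{-(1+u)s} ds` and integrating out `u` against the Gamma density by Fubini gives
`E[(1+γ)⁻²] = β^α ∫₀^∞ s e^{-s} (β+s)^{-α} ds`; the substitution `s = β(t-1)` turns this into
`β² e^β (E_{α-1}(β) - E_α(β))`, and the recurrence `β E_{α-1}(β) = e^{-β} + (1-α) E_α(β)`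
(integration by parts) eliminates `E_{α-1}`.
-/

open Real MeasureTheory Set Filter

theorem integral_comp_add_right_Ioi {E : Type*} [NormedAddCommGroup E] [NormedSpace ℝ E]
    (g : ℝ → E) (a c : ℝ) : ∫ x in Ioi a, g (x + c) = ∫ x in Ioi (a + c), g x := by
  have h := (measurePreserving_add_right volume c).setIntegral_preimage_emb
    (measurableEmbedding_addRight c) g (Ioi (a + c))
  rwa [preimage_add_const_Ioi, add_sub_cancel_right] at h

theorem integral_integral_swap_of_nonneg {X Y : Type*} [MeasurableSpace X] [MeasurableSpace Y]
    {μ : Measure X} {ν : Measure Y} [SFinite μ] [SFinite ν] {f : X → Y → ℝ}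
    (hf : AEStronglyMeasurable (Function.uncurry f) (μ.prod ν))
    (hf_nonneg : ∀ᵐ x ∂μ, ∀ᵐ y ∂ν, 0 ≤ f x y) (hf_sec : ∀ᵐ x ∂μ, Integrable (f x) ν)
    (hf_int : Integrable (fun x => ∫ y, f x y ∂ν) μ) :
    ∫ x, ∫ y, f x y ∂ν ∂μ = ∫ y, ∫ x, f x y ∂μ ∂ν := by
  refine integral_integral_swap ((integrable_prod_iff hf).2 ⟨hf_sec, hf_int.congr ?_⟩)
  filter_upwards [hf_nonneg] with x hx
  exact integral_congr_ae (hx.mono fun y hy => (norm_of_nonneg hy).symm)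

lemma integrableOn_rpow_sub_one_mul_exp_neg_mul {a b : ℝ} (ha : 0 < a) (hb : 0 < b) :
    IntegrableOn (fun x => x ^ (a - 1) * exp (-(b * x))) (Ioi 0) := by
  simpa only [rpow_one, neg_mul] using
    integrableOn_rpow_mul_exp_neg_mul_rpow (p := 1) (by linarith : -1 < a - 1) one_pos hb

lemma integrableOn_exp_neg_mul_mul_rpow_Ioi_one {b : ℝ} (hb : 0 < b) (s : ℝ) :
    IntegrableOn (fun t => exp (-b * t) * t ^ s) (Ioi 1) := by
  have hmaj : IntegrableOn (fun t => t ^ (|s| + 1 - 1) * exp (-(b * t))) (Ioi 1) :=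
    (integrableOn_rpow_sub_one_mul_exp_neg_mul (by positivity) hb).mono_set
      (Ioi_subset_Ioi zero_le_one)
  refine hmaj.mono' (by fun_prop) ?_
  filter_upwards [ae_restrict_mem measurableSet_Ioi] with t (ht : 1 < t)
  rw [norm_of_nonneg (by positivity), add_sub_cancel_right, neg_mul, mul_comm]
  gcongr
  exacts [ht.le, le_abs_self s]

lemma integral_mul_exp_neg_mul {c : ℝ} (hc : 0 < c) :
    ∫ s in Ioi 0, s * exp (-(c * s)) = (c ^ 2)⁻¹ := by
  have h := integral_rpow_mul_exp_neg_mul_Ioi two_pos hc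
  norm_num at h
  rw [h, ← inv_pow]

lemma integrableOn_mul_exp_neg_mul {c : ℝ} (hc : 0 < c) :
    IntegrableOn (fun s => s * exp (-(c * s))) (Ioi 0) := by
  have h := integrableOn_rpow_sub_one_mul_exp_neg_mul two_pos hc
  norm_num at h
  exact h

lemma mul_expIntE_sub_one (α : ℝ) {β : ℝ} (hβ : 0 < β) :
    β * expIntE (α - 1) β = exp (-β) + (1 - α) * expIntE α β := by
  have hderiv : ∀ t ∈ Ioi (1 : ℝ), HasDerivAt (fun t => exp (-β * t) * t ^ (1 - α))
      ((1 - α) * (exp (-β * t) * t ^ (-α)) - β * (exp (-β * t) * t ^ (-(α - 1)))) t := by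
    intro t (ht : 1 < t)
    refine (((hasDerivAt_id t).const_mul (-β)).exp.mul
      (hasDerivAt_rpow_const (p := 1 - α) (Or.inl (zero_lt_one.trans ht).ne'))).congr_deriv ?_
    rw [show 1 - α - 1 = -α by ring, show -(α - 1) = 1 - α by ring]
    simp only [id, mul_one]
    ring
  have hcont : ContinuousWithinAt (fun t => exp (-β * t) * t ^ (1 - α)) (Ici 1) 1 :=
    ((continuous_exp.comp (continuous_const.mul continuous_id)).continuousAt.mul
      (continuousAt_rpow_const 1 _ (Or.inl one_ne_zero))).continuousWithinAt
  have hlim : Tendsto (fun t => exp (-β * t) * t ^ (1 - α)) atTop (nhds 0) := by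
    simpa only [mul_comm] using tendsto_rpow_mul_exp_neg_mul_atTop_nhds_zero (1 - α) β hβ
  have hE := (integrableOn_exp_neg_mul_mul_rpow_Ioi_one hβ (-α)).const_mul (1 - α)
  have hE' := (integrableOn_exp_neg_mul_mul_rpow_Ioi_one hβ (-(α - 1))).const_mul β
  have h := integral_Ioi_of_hasDerivAt_of_tendsto hcont hderiv (hE.sub hE') hlim
  rw [integral_sub hE hE', integral_const_mul, integral_const_mul] at h
  simp only [one_rpow, mul_one] at h
  unfold expIntE
  linarith

lemma integral_Ioi_one_sub_one_mul_exp_neg_mul_rpow (α : ℝ) {β : ℝ} (hβ : 0 < β) :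
    ∫ t in Ioi 1, (t - 1) * exp (-β * t) * t ^ (-α) = expIntE (α - 1) β - expIntE α β := by
  have hsplit : ∀ t ∈ Ioi (1 : ℝ), (t - 1) * exp (-β * t) * t ^ (-α)
      = exp (-β * t) * t ^ (-(α - 1)) - exp (-β * t) * t ^ (-α) := by
    intro t (ht : 1 < t)
    rw [show -(α - 1) = 1 + -α by ring, rpow_add (zero_lt_one.trans ht), rpow_one]
    ring
  rw [setIntegral_congr_fun measurableSet_Ioi hsplit,
    integral_sub (integrableOn_exp_neg_mul_mul_rpow_Ioi_one hβ _)
      (integrableOn_exp_neg_mul_mul_rpow_Ioi_one hβ _)]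
  rfl

lemma integral_mul_exp_neg_mul_rpow_add (α : ℝ) {β : ℝ} (hβ : 0 < β) :
    ∫ s in Ioi 0, s * exp (-s) * (β + s) ^ (-α)
      = β ^ (2 - α) * exp β * (expIntE (α - 1) β - expIntE α β) := by
  set g : ℝ → ℝ := fun s => s * exp (-s) * (β + s) ^ (-α)
  have hg : ∀ t ∈ Ioi (1 : ℝ), β * g (β * t + -β)
      = β ^ (2 - α) * exp β * ((t - 1) * exp (-β * t) * t ^ (-α)) := by
    intro t (ht : 1 < t)
    have hexp : exp (-(β * t + -β)) = exp β * exp (-β * t) := by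
      rw [← exp_add]; ring_nf
    simp only [g, hexp, show β + (β * t + -β) = β * t by ring,
      mul_rpow hβ.le (zero_lt_one.trans ht).le, rpow_neg hβ.le,
      rpow_sub hβ, rpow_two]
    field_simp
    ring
  calc ∫ s in Ioi 0, g s = ∫ y in Ioi β, g (y + -β) := by
        rw [integral_comp_add_right_Ioi, add_neg_cancel]
    _ = β * ∫ t in Ioi 1, g (β * t + -β) := by
        rw [← smul_eq_mul, integral_comp_mul_left_Ioi' (fun y => g (y + -β)) 1 hβ, mul_one]
    _ = β ^ (2 - α) * exp β * (expIntE (α - 1) β - expIntE α β) := by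
        rw [← integral_const_mul, setIntegral_congr_fun measurableSet_Ioi hg,
          integral_const_mul, integral_Ioi_one_sub_one_mul_exp_neg_mul_rpow α hβ]

lemma gammaDens_eq (α β u : ℝ) :
    gammaDens α β u = β ^ α / Gamma α * (u ^ (α - 1) * exp (-(β * u))) := by
  rw [gammaDens, neg_mul]
  ring

lemma gammaDens_nonneg {α β u : ℝ} (hα : 0 < α) (hβ : 0 < β) (hu : 0 < u) :
    0 ≤ gammaDens α β u := by
  unfold gammaDens
  have := Gamma_pos_of_pos hα
  positivity

lemma integrableOn_gammaDens {α β : ℝ} (hα : 0 < α) (hβ : 0 < β) :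
    IntegrableOn (gammaDens α β) (Ioi 0) := by
  rw [show gammaDens α β = _ from funext (gammaDens_eq α β)]
  exact (integrableOn_rpow_sub_one_mul_exp_neg_mul hα hβ).const_mul _

lemma integral_gammaDens {α β : ℝ} (hα : 0 < α) (hβ : 0 < β) :
    ∫ u in Ioi 0, gammaDens α β u = 1 := by
  simp only [gammaDens_eq]
  rw [integral_const_mul, integral_rpow_mul_exp_neg_mul_Ioi hα hβ, one_div, inv_rpow hβ.le]
  have := Gamma_pos_of_pos hα
  field_simp

lemma integrableOn_inv_one_add_sq_mul_gammaDens {α β : ℝ} (hα : 0 < α) (hβ : 0 < β) :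
    IntegrableOn (fun u => ((1 + u) ^ 2)⁻¹ * gammaDens α β u) (Ioi 0) := by
  refine (integrableOn_gammaDens hα hβ).bdd_mul (c := 1) (by fun_prop) ?_
  filter_upwards [ae_restrict_mem measurableSet_Ioi] with u (hu : 0 < u)
  rw [norm_inv, norm_pow, Real.norm_of_nonneg (by positivity)]
  exact inv_le_one_of_one_le₀ (one_le_pow₀ (by linarith))

/-- `(1 + u)⁻² = ∫₀^∞ s e^{-(1+u)s} ds`; after swapping the integrals, the Gamma density
integrates against `e^{-us}` to its Laplace transform `(β / (β + s))^α`. -/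
lemma integral_inv_one_add_sq_mul_gammaDens_eq_mul_integral {α β : ℝ} (hα : 0 < α)
    (hβ : 0 < β) :
    ∫ u in Ioi 0, ((1 + u) ^ 2)⁻¹ * gammaDens α β u
      = β ^ α * ∫ s in Ioi 0, s * exp (-s) * (β + s) ^ (-α) := by
  set F : ℝ → ℝ → ℝ := fun u s => gammaDens α β u * (s * exp (-((1 + u) * s)))
  have inner_s : ∀ u ∈ Ioi (0 : ℝ),
      ∫ s in Ioi 0, F u s = ((1 + u) ^ 2)⁻¹ * gammaDens α β u := by
    intro u (hu : 0 < u)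
    rw [integral_const_mul, integral_mul_exp_neg_mul (by positivity), mul_comm]
  have inner_u : ∀ s ∈ Ioi (0 : ℝ), ∫ u in Ioi 0, F u s
      = β ^ α * (s * exp (-s) * (β + s) ^ (-α)) := by
    intro s (hs : 0 < s)
    have hF : ∀ u, F u s
        = s * exp (-s) * (β ^ α / Gamma α) * (u ^ (α - 1) * exp (-((β + s) * u))) := by
      intro u
      simp only [F, gammaDens_eq, mul_comm, mul_assoc, mul_left_comm, ← exp_add]
      ring_nf
    simp only [hF]
    rw [integral_const_mul, integral_rpow_mul_exp_neg_mul_Ioi hα (by positivity), one_div,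
      inv_rpow (by positivity), ← rpow_neg (by positivity)]
    have := Gamma_pos_of_pos hα
    field_simp
  calc ∫ u in Ioi 0, ((1 + u) ^ 2)⁻¹ * gammaDens α β u
      = ∫ u in Ioi 0, ∫ s in Ioi 0, F u s := (setIntegral_congr_fun measurableSet_Ioi inner_s).symm
    _ = ∫ s in Ioi 0, ∫ u in Ioi 0, F u s := by
        refine integral_integral_swap_of_nonneg (by unfold F gammaDens; fun_prop) ?_ ?_ ?_
        · filter_upwards [ae_restrict_mem measurableSet_Ioi] with u (hu : 0 < u)
          filter_upwards [ae_restrict_mem measurableSet_Ioi] with s (hs : 0 < s)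
          exact mul_nonneg (gammaDens_nonneg hα hβ hu) (by positivity)
        · filter_upwards [ae_restrict_mem measurableSet_Ioi] with u (hu : 0 < u)
          exact (integrableOn_mul_exp_neg_mul (by positivity)).const_mul _
        · exact (integrableOn_inv_one_add_sq_mul_gammaDens hα hβ).congr_fun
            (fun u hu => (inner_s u hu).symm) measurableSet_Ioi
    _ = β ^ α * ∫ s in Ioi 0, s * exp (-s) * (β + s) ^ (-α) := by
        rw [setIntegral_congr_fun measurableSet_Ioi inner_u, integral_const_mul]

lemma integral_inv_one_add_sq_mul_gammaDens {α β : ℝ} (hα : 0 < α) (hβ : 0 < β) :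
    ∫ u in Ioi 0, ((1 + u) ^ 2)⁻¹ * gammaDens α β u
      = β + β * exp β * (1 - α - β) * expIntE α β := by
  rw [integral_inv_one_add_sq_mul_gammaDens_eq_mul_integral hα hβ,
    integral_mul_exp_neg_mul_rpow_add α hβ, ← mul_assoc, ← mul_assoc, ← rpow_add hβ,
    add_sub_cancel, rpow_two]
  have hrec := mul_expIntE_sub_one α hβ
  have hexp : exp β * exp (-β) = 1 := by rw [← exp_add, add_neg_cancel, exp_zero]
  linear_combination β * exp β * hrec + β * hexp

theorem expected_truncated_dispersion_gamma (α β : ℝ) (hα : 0 < α) (hβ : 0 < β) :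
    (∫ u in Set.Ioi (0 : ℝ), (1 - 1 / (2 * (1 + u) ^ 2)) * gammaDens α β u) =
      (1 / 2) * (2 - β + Real.exp β * β * (α + β - 1) * expIntE α β) := by
  have hsplit : ∀ u, (1 - 1 / (2 * (1 + u) ^ 2)) * gammaDens α β u
      = gammaDens α β u - 2⁻¹ * (((1 + u) ^ 2)⁻¹ * gammaDens α β u) := by
    intro u
    rw [one_div, mul_inv]
    ring
  simp only [hsplit]
  rw [integral_sub (integrableOn_gammaDens hα hβ)
      ((integrableOn_inv_one_add_sq_mul_gammaDens hα hβ).const_mul _),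
    integral_const_mul, integral_gammaDens hα hβ, integral_inv_one_add_sq_mul_gammaDens hα hβ]
  ring
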